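/- Let 0 < q < 1 and let k ≥ 1 be an integer. Then ∏_{i=0}^{2k−1} Γ_{q²}((i+1)/2) / Γ_{q²}(k + (i+1)/2) = ([2]_q)^{2k²} / [2k−1]_q!! · ∏_{j=1}^{2k−1} [j]_q! / [2j]_q!. -/

import Mathlib

open MeasureTheory Finset Filter

noncomputable section

/-- The point `(e^{2πiθ_1}, …, e^{2πiθ_n})` on the `n`-torus. -/
def torusPoint {n : ℕ} (θ : Fin n → ℝ) : Fin n → ℂ :=
  fun j => Complex.exp (2 * Real.pi * Complex.I * (θ j))

/-- Mean value of a real-valued function on the `n`-torus with respect to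
the (not necessarily normalized) weight `w`. -/
def torusAvg {n : ℕ} (w : (Fin n → ℂ) → ℝ) (f : (Fin n → ℂ) → ℝ) : ℝ :=
  (∫ θ in Set.Icc (0 : Fin n → ℝ) 1, f (torusPoint θ) * w (torusPoint θ)) /
    ∫ θ in Set.Icc (0 : Fin n → ℝ) 1, w (torusPoint θ)

/-- Mean value of a complex-valued function on the `n`-torus with respect to
the weight `w`. -/
def torusAvgC {n : ℕ} (w : (Fin n → ℂ) → ℝ) (f : (Fin n → ℂ) → ℂ) : ℂ :=
  (∫ θ in Set.Icc (0 : Fin n → ℝ) 1, f (torusPoint θ) * (w (torusPoint θ) : ℂ)) /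
    ∫ θ in Set.Icc (0 : Fin n → ℝ) 1, (w (torusPoint θ) : ℂ)

/-- Infinite q-Pochhammer symbol `(a;q)_∞` (complex `a`, real nome `q`). -/
def qPochC (a : ℂ) (q : ℝ) : ℂ := ∏' r : ℕ, (1 - a * (q : ℂ) ^ r)

/-- Infinite q-Pochhammer symbol `(a;q)_∞` (real version). -/
def qPochR (a q : ℝ) : ℝ := ∏' r : ℕ, (1 - a * q ^ r)

/-- Macdonald weight function `Δ^Mac(z;q,t)`. -/
def deltaMac {n : ℕ} (q t : ℝ) (z : Fin n → ℂ) : ℝ :=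
  ∏ i : Fin n, ∏ j ∈ Finset.univ.filter (fun j => i < j),
    ‖qPochC (z i * (z j)⁻¹) q / qPochC ((t : ℂ) * (z i * (z j)⁻¹)) q‖ ^ 2

/-- `Ψ^A(z;η) = ∏_j (1 + η z_j)`. -/
def psiA {n : ℕ} (z : Fin n → ℂ) (η : ℂ) : ℂ := ∏ j : Fin n, (1 + η * z j)

/-- The `q`-gamma function `Γ_q(x) = (1-q)^{1-x} (q;q)_∞ / (q^x;q)_∞` for `0<q<1`. -/
def qGamma (q x : ℝ) : ℝ := (1 - q) ^ (1 - x) * qPochR q q / qPochR (q ^ x) q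

/-- The `q`-integer `[n]_q = (1-q^n)/(1-q)`. -/
def qInt (q : ℝ) (n : ℕ) : ℝ := (1 - q ^ n) / (1 - q)

/-- The `q`-factorial `[n]_q! = [n]_q [n-1]_q ⋯ [1]_q`. -/
def qFact (q : ℝ) (n : ℕ) : ℝ := ∏ i ∈ Finset.range n, qInt q (i + 1)

/-- The odd `q`-double factorial `[2k-1]_q!! = [2k-1]_q [2k-3]_q ⋯ [3]_q [1]_q`. -/
def qOddDoubleFact (q : ℝ) (k : ℕ) : ℝ := ∏ i ∈ Finset.range k, qInt q (2 * i + 1)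

/-!
With `Q = q²` and `x = (i + 1) / 2` we have `Q ^ x = q ^ (i + 1)`, so the functional equation
`Γ_Q(x) / Γ_Q(x + k) = (1 - Q) ^ k / (Q ^ x; Q)_k` turns the `i`-th factor of the left side into
`∏_{r<k} [2]_q / [2r+i+1]_q`. Hence the left side is `[2]_q ^ (2k²)` divided by
`∏_{r<k} [2r+2k]_q! / [2r]_q!`, and the theorem reduces to the identity
`∏_{r<k} F(2r+1) · ∏_{j<2k-1} F(2j+2) = ∏_{r<k} F(2r+2k) · ∏_{j<2k-1} F(j+1)`
for `F = [·]_q!`. Both sides are the product of `F` over the odd numbers below `2k` and the even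
numbers from `2` to `4k-2`, so it holds for every `F`.
-/

section CommMonoid

variable {M : Type*} [CommMonoid M]

lemma prod_range_two_mul (g : ℕ → M) (n : ℕ) :
    ∏ j ∈ range (2 * n), g j = (∏ j ∈ range n, g (2 * j)) * ∏ j ∈ range n, g (2 * j + 1) := by
  induction n with
  | zero => simp
  | succ n ih =>
    rw [mul_add, mul_one, prod_range_succ, prod_range_succ, ih, prod_range_succ, prod_range_succ]
    ac_rfl

lemma prod_odd_mul_prod_even_eq (F : ℕ → M) (k : ℕ) :
    (∏ r ∈ range k, F (2 * r + 1)) * ∏ j ∈ range (2 * k - 1), F (2 * (j + 1)) =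
      (∏ r ∈ range k, F (2 * r + 2 * k)) * ∏ j ∈ range (2 * k - 1), F (j + 1) := by
  rcases k with _ | t
  · simp
  have hall : ∏ j ∈ range (2 * (t + 1) - 1), F (j + 1) =
      (∏ r ∈ range (t + 1), F (2 * r + 1)) * ∏ j ∈ range t, F (2 * (j + 1)) := by
    rw [show 2 * (t + 1) - 1 = 2 * t + 1 by omega, prod_range_succ, prod_range_two_mul,
      prod_range_succ]
    simp only [mul_add, mul_one, add_assoc, one_add_one_eq_two]
    ac_rfl
  have heven : ∏ j ∈ range (2 * (t + 1) - 1), F (2 * (j + 1)) =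
      (∏ j ∈ range t, F (2 * (j + 1))) * ∏ r ∈ range (t + 1), F (2 * r + 2 * (t + 1)) := by
    rw [show 2 * (t + 1) - 1 = t + (t + 1) by omega, prod_range_add]
    congr 1
    exact prod_congr rfl fun r _ => congrArg F (by ring)
  rw [hall, heven]
  ac_rfl

end CommMonoid

namespace qPochR

variable {a q : ℝ}

lemma multipliable (a : ℝ) (hq : |q| < 1) : Multipliable fun r : ℕ => 1 - a * q ^ r := by
  simpa [sub_eq_add_neg] using
    Real.multipliable_one_add_of_summable ((summable_geometric_of_abs_lt_one hq).mul_left a).neg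

lemma ne_zero (hq : |q| < 1) (ha : ∀ r : ℕ, a * q ^ r ≠ 1) : qPochR a q ≠ 0 := by
  have hsum : Summable fun r : ℕ => ‖-(a * q ^ r)‖ := by
    simpa [abs_mul, abs_pow] using (summable_geometric_of_lt_one (abs_nonneg q) hq).mul_left |a|
  simpa [qPochR, sub_eq_add_neg] using
    tprod_one_add_ne_zero_of_summable
      (fun r => by rw [← sub_eq_add_neg, sub_ne_zero]; exact (ha r).symm) hsum

lemma eq_prod_mul (a : ℝ) (hq : |q| < 1) (n : ℕ) :
    qPochR a q = (∏ r ∈ range n, (1 - a * q ^ r)) * qPochR (a * q ^ n) q := by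
  have shift (r : ℕ) : 1 - a * q ^ (r + n) = 1 - a * q ^ n * q ^ r := by ring
  have hm : Multipliable fun r : ℕ => 1 - a * q ^ (r + n) := by
    simp only [shift]
    exact multipliable (a * q ^ n) hq
  rw [qPochR, qPochR, ← Multipliable.prod_mul_tprod_nat_mul' (f := fun r => 1 - a * q ^ r) hm]
  simp only [shift]

end qPochR

lemma qGamma_div_qGamma_add_nat {q x : ℝ} (hq0 : 0 < q) (hq1 : q < 1) (hx : 0 < x) (n : ℕ) :
    qGamma q x / qGamma q (x + n) = (1 - q) ^ n / ∏ r ∈ range n, (1 - q ^ x * q ^ r) := by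
  have hq : |q| < 1 := by rwa [abs_of_pos hq0]
  have h1q : 0 < 1 - q := by linarith
  have hpoch_ne (a : ℝ) (ha0 : 0 ≤ a) (ha1 : a < 1) : qPochR a q ≠ 0 :=
    qPochR.ne_zero hq fun r =>
      (mul_lt_one_of_nonneg_of_lt_one_left ha0 ha1 (pow_le_one₀ hq0.le hq1.le)).ne
  have hfactor (r : ℕ) : 0 < 1 - q ^ x * q ^ r := by
    have : q ^ x * q ^ r < 1 := mul_lt_one_of_nonneg_of_lt_one_left (by positivity)
      (Real.rpow_lt_one hq0.le hq1 hx) (pow_le_one₀ hq0.le hq1.le)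
    linarith
  have hpoch : qPochR (q ^ x) q =
      (∏ r ∈ range n, (1 - q ^ x * q ^ r)) * qPochR (q ^ (x + n)) q := by
    rw [Real.rpow_add_natCast hq0.ne', qPochR.eq_prod_mul _ hq]
  have hpow : (1 - q) ^ (1 - x) = (1 - q) ^ (1 - (x + n)) * (1 - q) ^ n := by
    rw [← Real.rpow_natCast, ← Real.rpow_add h1q]
    ring_nf
  have hpoch_q := hpoch_ne q hq0.le hq1
  have hpoch_tail :=
    hpoch_ne (q ^ (x + n)) (by positivity) (Real.rpow_lt_one hq0.le hq1 (by positivity))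
  have hprod := (prod_pos (s := range n) fun r _ => hfactor r).ne'
  have hrpow := (Real.rpow_pos_of_pos h1q (1 - (x + n))).ne'
  rw [qGamma, qGamma, hpoch, hpow]
  field_simp

section qFactorial

variable {q : ℝ}

lemma one_sub_pow_eq_mul_qInt (hq : q ≠ 1) (m : ℕ) : 1 - q ^ m = (1 - q) * qInt q m := by
  rw [qInt, mul_div_cancel₀ _ (sub_ne_zero.2 hq.symm)]

lemma qInt_pos (hq0 : 0 ≤ q) (hq1 : q < 1) {m : ℕ} (hm : m ≠ 0) : 0 < qInt q m :=
  div_pos (sub_pos.2 (pow_lt_one₀ hq0 hq1 hm)) (sub_pos.2 hq1)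

lemma qFact_pos (hq0 : 0 ≤ q) (hq1 : q < 1) (n : ℕ) : 0 < qFact q n :=
  prod_pos fun i _ => qInt_pos hq0 hq1 i.succ_ne_zero

lemma qFact_succ (q : ℝ) (n : ℕ) : qFact q (n + 1) = qFact q n * qInt q (n + 1) :=
  prod_range_succ _ n

lemma qFact_add (q : ℝ) (m n : ℕ) :
    qFact q (m + n) = qFact q m * ∏ i ∈ range n, qInt q (m + i + 1) :=
  prod_range_add _ m n

lemma qOddDoubleFact_mul_prod_qFact_even (hq0 : 0 ≤ q) (hq1 : q < 1) (k : ℕ) :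
    qOddDoubleFact q k * ∏ j ∈ range (2 * k - 1), qFact q (2 * (j + 1)) =
      (∏ r ∈ range k, ∏ i ∈ range (2 * k), qInt q (2 * r + i + 1)) *
        ∏ j ∈ range (2 * k - 1), qFact q (j + 1) := by
  have hkey := prod_odd_mul_prod_even_eq (qFact q) k
  rw [prod_congr rfl fun r _ => qFact_succ q (2 * r),
    prod_congr rfl fun r _ => qFact_add q (2 * r) (2 * k), prod_mul_distrib, prod_mul_distrib,
    mul_assoc, mul_assoc] at hkey
  exact mul_left_cancel₀ (prod_pos fun r _ => qFact_pos hq0 hq1 (2 * r)).ne' hkey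

end qFactorial

lemma qGamma_sq_half_div {q : ℝ} (hq0 : 0 < q) (hq1 : q < 1) (i n : ℕ) :
    qGamma (q ^ 2) (((i : ℝ) + 1) / 2) / qGamma (q ^ 2) ((n : ℝ) + ((i : ℝ) + 1) / 2) =
      ∏ r ∈ range n, qInt q 2 / qInt q (2 * r + i + 1) := by
  have hq2 : (q ^ 2) ^ (((i : ℝ) + 1) / 2) = q ^ (i + 1) := by
    rw [← Real.rpow_natCast q 2, ← Real.rpow_mul hq0.le, ← Real.rpow_natCast]
    push_cast
    ring_nf
  rw [add_comm (n : ℝ), qGamma_div_qGamma_add_nat (by positivity) (by nlinarith) (by positivity),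
    hq2, pow_eq_prod_const, ← prod_div_distrib]
  refine prod_congr rfl fun r _ => ?_
  rw [show q ^ (i + 1) * (q ^ 2) ^ r = q ^ (2 * r + i + 1) by ring,
    one_sub_pow_eq_mul_qInt hq1.ne, one_sub_pow_eq_mul_qInt hq1.ne,
    mul_div_mul_left _ _ (sub_ne_zero.2 hq1.ne')]

theorem qGamma_ratio_f4_general (q : ℝ) (hq0 : 0 < q) (hq1 : q < 1) (k : ℕ) :
    ∏ i ∈ Finset.range (2 * k),
        qGamma (q ^ 2) (((i : ℝ) + 1) / 2) /
          qGamma (q ^ 2) ((k : ℝ) + ((i : ℝ) + 1) / 2) =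
    qInt q 2 ^ (2 * k ^ 2) / qOddDoubleFact q k *
      ∏ j ∈ Finset.range (2 * k - 1), qFact q (j + 1) / qFact q (2 * (j + 1)) := by
  set X := ∏ r ∈ range k, ∏ i ∈ range (2 * k), qInt q (2 * r + i + 1)
  have hlhs : ∏ i ∈ range (2 * k), qGamma (q ^ 2) (((i : ℝ) + 1) / 2) /
      qGamma (q ^ 2) ((k : ℝ) + ((i : ℝ) + 1) / 2) = qInt q 2 ^ (2 * k ^ 2) / X := by
    rw [prod_congr rfl fun i _ => qGamma_sq_half_div hq0 hq1 i k, Finset.prod_comm]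
    simp only [prod_div_distrib, prod_const, card_range, ← pow_mul]
    rw [mul_assoc, ← sq]
  have hX : X ≠ 0 := (prod_pos fun r _ => prod_pos fun i _ => qInt_pos hq0.le hq1 (by omega)).ne'
  have hO : qOddDoubleFact q k ≠ 0 := (prod_pos fun r _ => qInt_pos hq0.le hq1 (by omega)).ne'
  have hE := (prod_pos (s := range (2 * k - 1)) fun j _ => qFact_pos hq0.le hq1 (2 * (j + 1))).ne'
  rw [hlhs, prod_div_distrib]
  field_simp
  rw [mul_assoc, mul_assoc, qOddDoubleFact_mul_prod_qFact_even hq0.le hq1 k]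

/-- Example 4.3, equation (4.4): evaluation of `𝓕_4^q(2k)`. -/
theorem qGamma_ratio_f4 (q : ℝ) (hq0 : 0 < q) (hq1 : q < 1) (k : ℕ) (hk : 1 ≤ k) :
    ∏ i ∈ Finset.range (2 * k),
        qGamma (q ^ 2) (((i : ℝ) + 1) / 2) /
          qGamma (q ^ 2) ((k : ℝ) + ((i : ℝ) + 1) / 2) =
    qInt q 2 ^ (2 * k ^ 2) / qOddDoubleFact q k *
      ∏ j ∈ Finset.range (2 * k - 1), qFact q (j + 1) / qFact q (2 * (j + 1)) :=
  qGamma_ratio_f4_general q hq0 hq1 k
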